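/- With the increment-gadget construction (G_i of length i+u for i ∈ [2,u], S the concatenation of c_j copies of G_{e_j} for j = 1..m in increasing order of e_j): the number d of indices i ∈ [2,|S|] with lmco(i) ≠ lmco(i−1) satisfies m ≤ d ≤ 8m, and |S| ≤ 2u·(c₁+...+c_m). -/

import Mathlib

open Finset

/-- `[i,j]` is a co-occurrence of `Q` in the length-`n` string `S` (1-indexed):
`1 ≤ i ≤ j ≤ n` and every character of `Q` occurs in `S[i..j]`. -/
def Cooc {α : Type*} (n : ℕ) (S : ℕ → α) (Q : Finset α) (i j : ℕ) : Prop :=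
  1 ≤ i ∧ i ≤ j ∧ j ≤ n ∧ ∀ c ∈ Q, ∃ k, i ≤ k ∧ k ≤ j ∧ S k = c

/-- `[i,j]` is a left-minimal co-occurrence: a co-occurrence such that `[i+1,j]` is not. -/
def LeftMinCooc {α : Type*} (n : ℕ) (S : ℕ → α) (Q : Finset α) (i j : ℕ) : Prop :=
  Cooc n S Q i j ∧ ¬ Cooc n S Q (i+1) j

/-- `[i,j]` is a minimal co-occurrence: a co-occurrence such that neither
`[i+1,j]` nor `[i,j-1]` is a co-occurrence. -/
def MinCooc {α : Type*} (n : ℕ) (S : ℕ → α) (Q : Finset α) (i j : ℕ) : Prop :=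
  Cooc n S Q i j ∧ ¬ Cooc n S Q (i+1) j ∧ ¬ Cooc n S Q i (j-1)

/-- `lmco n S Q w`: number of left-minimal co-occurrences of `Q` in `S` of length `w`. -/
noncomputable def lmco {α : Type*} (n : ℕ) (S : ℕ → α) (Q : Finset α) (w : ℕ) : ℕ :=
  {p : ℕ × ℕ | LeftMinCooc n S Q p.1 p.2 ∧ p.2 - p.1 + 1 = w}.ncard

/-- `dlt n S Q i = lmco(i) - lmco(i-1)` as an integer. -/
noncomputable def dlt {α : Type*} (n : ℕ) (S : ℕ → α) (Q : Finset α) (i : ℕ) : ℤ :=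
  (lmco n S Q i : ℤ) - (lmco n S Q (i-1) : ℤ)

/-- `coN n S Q w`: number of length-`w` co-occurrences of `Q` in `S`, i.e. the number of
windows `[k-w+1,k]` with `w ≤ k ≤ n` that are co-occurrences. -/
noncomputable def coN {α : Type*} (n : ℕ) (S : ℕ → α) (Q : Finset α) (w : ℕ) : ℕ :=
  {k : ℕ | w ≤ k ∧ k ≤ n ∧ Cooc n S Q (k - w + 1) k}.ncard

/-- The increment gadget `G_i = A · $^{i-2} · B · $^{u}` (with `$` written `D`). -/
def Gadget {α : Type*} (A B D : α) (u i : ℕ) : List α :=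
  A :: (List.replicate (i - 2) D ++ B :: List.replicate u D)

/-- Concatenation of `c 1` copies of `G_{e 1}`, then `c 2` copies of `G_{e 2}`, …,
then `c m` copies of `G_{e m}`. -/
def GadgetString {α : Type*} (A B D : α) (u m : ℕ) (e c : ℕ → ℕ) : List α :=
  ((List.range m).map (fun j => (List.replicate (c (j+1)) (Gadget A B D u (e (j+1)))).flatten)).flatten


/-!
In `S` the letters `A` and `B` occur alternately, at positions `t 0 < t 1 < ⋯` (the `A` and the
`B` of each gadget). A left-minimal co-occurrence starts at some `t r` and ends in
`[t (r+1), t (r+2))`, so `lmco w` counts the `r` with `t (r+1) - t r < w ≤ t (r+2) - t r`, and it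
can change only at `w = t (r+1) - t r + 1` or `w = t (r+2) - t r + 1`. For the gadget string these
values are `u + 2`, the `e j` and the `e j + u + 1`, so there are at most `2m + 1` jumps. At
`w = e j ≤ u` the length range of the `A` of a copy of `G_{e j}` begins while no range ends,
since every range reaches beyond `u + 1`; this gives a jump at each of the `m` values `e j`.
-/

section LeftMinimal

variable {α : Type*} {n : ℕ} {S : ℕ → α} {Q : Finset α}

theorem leftMinCooc_iff (hQ : Q.Nonempty) {i j : ℕ} :
    LeftMinCooc n S Q i j ↔
      Cooc n S Q i j ∧ S i ∈ Q ∧ ∀ p, i < p → p ≤ j → S p ≠ S i := by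
  constructor
  · rintro ⟨hc, hnc⟩
    obtain ⟨hi, hij, hj, hocc⟩ := hc
    rcases hij.eq_or_lt with rfl | hij
    · obtain ⟨c, hc⟩ := hQ
      obtain ⟨k, hik, hki, rfl⟩ := hocc c hc
      obtain rfl : k = i := by omega
      exact ⟨⟨hi, le_rfl, hj, hocc⟩, hc, fun p h1 h2 => absurd h2 (by omega)⟩
    · obtain ⟨c, hcQ, hc⟩ : ∃ c ∈ Q, ∀ k, i + 1 ≤ k → k ≤ j → S k ≠ c := by
        by_contra! h
        exact hnc ⟨by omega, hij, hj, h⟩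
      obtain ⟨k, hik, hkj, rfl⟩ := hocc c hcQ
      obtain rfl : k = i := by_contra fun hk => hc k (by omega) hkj rfl
      exact ⟨⟨hi, hij.le, hj, hocc⟩, hcQ, fun p h1 h2 => hc p h1 h2⟩
  · rintro ⟨hc, hiQ, hnot⟩
    refine ⟨hc, fun ⟨_, _, _, hocc⟩ => ?_⟩
    obtain ⟨k, hik, hkj, hk⟩ := hocc (S i) hiQ
    exact hnot k hik hkj hk

theorem le_of_lmco_ne_zero {w : ℕ} (h : lmco n S Q w ≠ 0) : w ≤ n := by
  obtain ⟨⟨i, j⟩, ⟨⟨hi, hij, hj, -⟩, -⟩, hw⟩ := Set.nonempty_of_ncard_ne_zero h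
  dsimp only at hi hij hj hw
  omega

end LeftMinimal

section IntervalCount

variable {ι : Type*} (s : Finset ι) (lo hi : ι → ℕ)

theorem exists_eq_of_card_filter_ne {w : ℕ}
    (h : (s.filter fun r => lo r < w ∧ w ≤ hi r).card ≠
      (s.filter fun r => lo r < w - 1 ∧ w - 1 ≤ hi r).card) :
    ∃ r ∈ s, w = lo r + 1 ∨ w = hi r + 1 := by
  by_contra! hw
  refine h (congrArg _ (filter_congr fun r hr => ?_))
  have := hw r hr
  omega

theorem card_filter_pred_lt {w : ℕ} (hhi : ∀ r ∈ s, w ≤ hi r) (hlo : ∃ r ∈ s, lo r + 1 = w) :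
    (s.filter fun r => lo r < w - 1 ∧ w - 1 ≤ hi r).card <
      (s.filter fun r => lo r < w ∧ w ≤ hi r).card := by
  obtain ⟨r₀, hr₀, hw⟩ := hlo
  refine card_lt_card ((ssubset_iff_of_subset fun r hr => ?_).2 ⟨r₀, ?_, ?_⟩)
  · simp only [mem_filter] at hr ⊢
    exact ⟨hr.1, by omega, hhi r hr.1⟩
  · simp only [mem_filter]
    exact ⟨hr₀, by omega, hhi r₀ hr₀⟩
  · simp only [mem_filter]
    omega

end IntervalCount

/-- In `S[1..n]` the letters `A` and `B` occur exactly at the positions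
`t 0 < t 1 < ⋯ < t (M-1)`, alternately `A, B, A, …`; `t M = n + 1` serves as a sentinel. -/
structure AlternatingMarkers {α : Type*} (n : ℕ) (S : ℕ → α) (A B : α) (t : ℕ → ℕ) (M : ℕ) :
    Prop where
  one_le : 1 ≤ t 0
  lt_succ : ∀ r < M, t r < t (r + 1)
  eq_sentinel : t M = n + 1
  eq_A_iff : ∀ p, 1 ≤ p → p ≤ n → (S p = A ↔ ∃ r < M, r % 2 = 0 ∧ t r = p)
  eq_B_iff : ∀ p, 1 ≤ p → p ≤ n → (S p = B ↔ ∃ r < M, r % 2 = 1 ∧ t r = p)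

namespace AlternatingMarkers

variable {α : Type*} {n : ℕ} {S : ℕ → α} {A B : α} {t : ℕ → ℕ} {M : ℕ}

theorem strictMonoOn (h : AlternatingMarkers n S A B t M) : StrictMonoOn t (Set.Iic M) :=
  strictMonoOn_Iic_of_lt_succ fun r hr => h.lt_succ r hr

theorem lt_iff_lt (h : AlternatingMarkers n S A B t M) {r s : ℕ} (hr : r ≤ M) (hs : s ≤ M) :
    t r < t s ↔ r < s :=
  h.strictMonoOn.lt_iff_lt hr hs

theorem le_iff_le (h : AlternatingMarkers n S A B t M) {r s : ℕ} (hr : r ≤ M) (hs : s ≤ M) :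
    t r ≤ t s ↔ r ≤ s :=
  h.strictMonoOn.le_iff_le hr hs

theorem apply_mem_Icc (h : AlternatingMarkers n S A B t M) {r : ℕ} (hr : r < M) :
    t r ∈ Set.Icc 1 n := by
  have h0 := (h.le_iff_le (Nat.zero_le _) hr.le).2 (Nat.zero_le r)
  have hM := (h.lt_iff_lt hr.le le_rfl).2 hr
  have := h.one_le
  have := h.eq_sentinel
  exact ⟨by omega, by omega⟩

theorem apply_eq_A (h : AlternatingMarkers n S A B t M) {r : ℕ} (hr : r < M) (h2 : r % 2 = 0) :
    S (t r) = A :=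
  (h.eq_A_iff _ (h.apply_mem_Icc hr).1 (h.apply_mem_Icc hr).2).2 ⟨r, hr, h2, rfl⟩

theorem apply_eq_B (h : AlternatingMarkers n S A B t M) {r : ℕ} (hr : r < M) (h2 : r % 2 = 1) :
    S (t r) = B :=
  (h.eq_B_iff _ (h.apply_mem_Icc hr).1 (h.apply_mem_Icc hr).2).2 ⟨r, hr, h2, rfl⟩

theorem apply_eq_apply_iff (h : AlternatingMarkers n S A B t M) {r p : ℕ} (hr : r < M)
    (hp : 1 ≤ p) (hpn : p ≤ n) :
    S p = S (t r) ↔ ∃ s < M, s % 2 = r % 2 ∧ t s = p := by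
  rcases Nat.mod_two_eq_zero_or_one r with h2 | h2
  · rw [h.apply_eq_A hr h2, h2, h.eq_A_iff p hp hpn]
  · rw [h.apply_eq_B hr h2, h2, h.eq_B_iff p hp hpn]

theorem exists_eq_of_apply_mem [DecidableEq α] (h : AlternatingMarkers n S A B t M) {p : ℕ}
    (hp : 1 ≤ p) (hpn : p ≤ n) (hpQ : S p ∈ ({A, B} : Finset α)) : ∃ r < M, t r = p := by
  rcases Finset.mem_insert.1 hpQ with hA | hB
  · obtain ⟨r, hr, -, rfl⟩ := (h.eq_A_iff p hp hpn).1 hA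
    exact ⟨r, hr, rfl⟩
  · obtain ⟨r, hr, -, rfl⟩ := (h.eq_B_iff p hp hpn).1 (Finset.mem_singleton.1 hB)
    exact ⟨r, hr, rfl⟩

theorem apply_mem [DecidableEq α] (h : AlternatingMarkers n S A B t M) {r : ℕ} (hr : r < M) :
    S (t r) ∈ ({A, B} : Finset α) := by
  rcases Nat.mod_two_eq_zero_or_one r with h2 | h2
  · simp [h.apply_eq_A hr h2]
  · simp [h.apply_eq_B hr h2]

-- Consecutive markers carry different letters.
theorem cooc_iff [DecidableEq α] (h : AlternatingMarkers n S A B t M) {i j : ℕ} :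
    Cooc n S {A, B} i j ↔ 1 ≤ i ∧ j ≤ n ∧ ∃ r, r + 1 < M ∧ i ≤ t r ∧ t (r + 1) ≤ j := by
  simp only [Cooc, Finset.mem_insert, Finset.mem_singleton, forall_eq_or_imp, forall_eq]
  constructor
  · rintro ⟨hi, -, hj, ⟨p, hip, hpj, hpA⟩, ⟨q, hiq, hqj, hqB⟩⟩
    obtain ⟨r, hr, hr2, rfl⟩ := (h.eq_A_iff p (by omega) (by omega)).1 hpA
    obtain ⟨s, hs, hs2, rfl⟩ := (h.eq_B_iff q (by omega) (by omega)).1 hqB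
    refine ⟨hi, hj, ?_⟩
    rcases lt_or_gt_of_ne (show r ≠ s by omega) with hrs | hsr
    · exact ⟨r, by omega, hip, ((h.le_iff_le (by omega) hs.le).2 hrs).trans hqj⟩
    · exact ⟨s, by omega, hiq, ((h.le_iff_le (by omega) hr.le).2 hsr).trans hpj⟩
  · rintro ⟨hi, hj, r, hr, hir, hrj⟩
    have hlt := h.lt_succ r (by omega)
    refine ⟨hi, by omega, hj, ?_, ?_⟩ <;> rcases Nat.mod_two_eq_zero_or_one r with h2 | h2
    · exact ⟨t r, hir, by omega, h.apply_eq_A (by omega) h2⟩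
    · exact ⟨t (r + 1), by omega, hrj, h.apply_eq_A hr (by omega)⟩
    · exact ⟨t (r + 1), by omega, hrj, h.apply_eq_B hr (by omega)⟩
    · exact ⟨t r, hir, by omega, h.apply_eq_B (by omega) h2⟩

theorem leftMinCooc_iff [DecidableEq α] (h : AlternatingMarkers n S A B t M) {i j : ℕ} :
    LeftMinCooc n S {A, B} i j ↔ ∃ r, r + 1 < M ∧ t r = i ∧ t (r + 1) ≤ j ∧ j < t (r + 2) := by
  rw [_root_.leftMinCooc_iff (Finset.insert_nonempty _ _), h.cooc_iff]
  constructor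
  · rintro ⟨⟨hi, hj, r, hr, hir, hrj⟩, hiQ, hnot⟩
    have := h.lt_succ r (by omega)
    obtain ⟨s, hs, rfl⟩ := h.exists_eq_of_apply_mem hi (by omega) hiQ
    have hsr : s ≤ r := (h.le_iff_le hs.le (by omega)).1 hir
    refine ⟨s, by omega, rfl,
      ((h.le_iff_le (by omega) (by omega)).2 (by omega)).trans hrj, ?_⟩
    by_contra! hj2
    rcases (show s + 2 = M ∨ s + 2 < M by omega) with hM | hM
    · have := h.eq_sentinel
      rw [hM] at hj2
      omega
    · refine hnot (t (s + 2)) ((h.lt_iff_lt hs.le hM.le).2 (by omega)) hj2 ?_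
      have := h.apply_mem_Icc hM
      exact (h.apply_eq_apply_iff hs this.1 this.2).2 ⟨s + 2, hM, by omega, rfl⟩
  · rintro ⟨r, hr, rfl, hrj, hjr⟩
    have hjn : j ≤ n := by
      have := (h.le_iff_le (show r + 2 ≤ M by omega) le_rfl).2 (by omega)
      have := h.eq_sentinel
      omega
    refine ⟨⟨(h.apply_mem_Icc (by omega)).1, hjn, r, hr, le_rfl, hrj⟩, h.apply_mem (by omega),
      fun p hrp hpj hp => ?_⟩
    have := h.apply_mem_Icc (show r < M by omega)
    obtain ⟨s, hs, hs2, rfl⟩ := (h.apply_eq_apply_iff (by omega) (by omega) (by omega)).1 hp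
    have h1 := (h.lt_iff_lt (by omega) hs.le).1 hrp
    have h2 := (h.lt_iff_lt hs.le (by omega)).1 (hpj.trans_lt hjr)
    omega

theorem lmco_eq [DecidableEq α] (h : AlternatingMarkers n S A B t M) (w : ℕ) :
    lmco n S {A, B} w =
      ((range (M - 1)).filter fun r => t (r + 1) - t r < w ∧ w ≤ t (r + 2) - t r).card := by
  have hset : {p : ℕ × ℕ | LeftMinCooc n S {A, B} p.1 p.2 ∧ p.2 - p.1 + 1 = w} =
      ((range (M - 1)).filter fun r => t (r + 1) - t r < w ∧ w ≤ t (r + 2) - t r).image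
        fun r => (t r, t r + w - 1) := by
    ext ⟨i, j⟩
    simp only [Set.mem_ofPred_eq, h.leftMinCooc_iff, coe_image, coe_filter, mem_range,
      Set.mem_image, Prod.mk.injEq]
    constructor
    · rintro ⟨⟨r, hr, rfl, hrj, hjr⟩, rfl⟩
      have := h.lt_succ r (by omega)
      exact ⟨r, ⟨by omega, by omega, by omega⟩, rfl, by omega⟩
    · rintro ⟨r, ⟨hr, hlo, hhi⟩, rfl, rfl⟩
      have := h.lt_succ r (by omega)
      exact ⟨⟨r, by omega, rfl, by omega, by omega⟩, by omega⟩
  rw [lmco, hset, Set.ncard_coe_finset, card_image_of_injOn]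
  intro r hr s hs hrs
  simp only [coe_filter, mem_range, Set.mem_ofPred_eq, Prod.mk.injEq] at hr hs hrs
  exact h.strictMonoOn.injOn (Set.mem_Iic.2 (by omega)) (Set.mem_Iic.2 (by omega)) hrs.1

theorem exists_gap_of_lmco_ne [DecidableEq α] (h : AlternatingMarkers n S A B t M) {w : ℕ}
    (hw : lmco n S {A, B} w ≠ lmco n S {A, B} (w - 1)) :
    ∃ r, r + 1 < M ∧ (w = t (r + 1) - t r + 1 ∨ w = t (r + 2) - t r + 1) := by
  rw [h.lmco_eq, h.lmco_eq] at hw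
  obtain ⟨r, hr, hw⟩ := exists_eq_of_card_filter_ne _ _ _ hw
  exact ⟨r, by rw [mem_range] at hr; omega, hw⟩

theorem lmco_pred_lt [DecidableEq α] (h : AlternatingMarkers n S A B t M) {w : ℕ}
    (hhi : ∀ r, r + 1 < M → w ≤ t (r + 2) - t r)
    (hlo : ∃ r, r + 1 < M ∧ t (r + 1) - t r + 1 = w) :
    lmco n S {A, B} (w - 1) < lmco n S {A, B} w := by
  obtain ⟨r, hr, hw⟩ := hlo
  rw [h.lmco_eq, h.lmco_eq]
  exact card_filter_pred_lt _ _ _ (fun s hs => hhi s (by rw [mem_range] at hs; omega))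
    ⟨r, by rw [mem_range]; omega, hw⟩

end AlternatingMarkers

section Gadget

variable {α : Type*}

def gadgetOffset (u : ℕ) (V : List ℕ) (k : ℕ) : ℕ := ((V.map (· + u)).take k).sum

theorem gadgetOffset_zero (u : ℕ) (V : List ℕ) : gadgetOffset u V 0 = 0 := by
  simp [gadgetOffset]

theorem gadgetOffset_cons_succ (u x : ℕ) (V : List ℕ) (k : ℕ) :
    gadgetOffset u (x :: V) (k + 1) = x + u + gadgetOffset u V k := by
  simp [gadgetOffset]

theorem gadgetOffset_succ (u : ℕ) {V : List ℕ} {k : ℕ} (hk : k < V.length) :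
    gadgetOffset u V (k + 1) = gadgetOffset u V k + (V.getD k 0 + u) := by
  rw [gadgetOffset, List.sum_take_succ _ _ (by simpa using hk), List.getD_eq_getElem _ _ hk]
  simp [gadgetOffset]

theorem gadgetOffset_length (u : ℕ) (V : List ℕ) :
    gadgetOffset u V V.length = (V.map (· + u)).sum := by
  rw [gadgetOffset, List.take_of_length_le (by simp)]

theorem exists_eq_gadgetOffset_add (u : ℕ) (V : List ℕ) {p : ℕ}
    (hp : p < gadgetOffset u V V.length) :
    ∃ k < V.length, ∃ q < V.getD k 0 + u, p = gadgetOffset u V k + q := by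
  suffices ∀ K ≤ V.length, p < gadgetOffset u V K →
      ∃ k < K, ∃ q < V.getD k 0 + u, p = gadgetOffset u V k + q from
    this _ le_rfl hp
  intro K
  induction K with
  | zero => simp [gadgetOffset_zero]
  | succ K ih =>
    intro hK hpK
    rw [gadgetOffset_succ u (by omega)] at hpK
    by_cases hlt : p < gadgetOffset u V K
    · obtain ⟨k, hk, q, hq, rfl⟩ := ih (by omega) hlt
      exact ⟨k, by omega, q, hq, rfl⟩
    · exact ⟨K, by omega, p - gadgetOffset u V K, by omega, by omega⟩

theorem length_gadget (A B D : α) (u : ℕ) {x : ℕ} (hx : 2 ≤ x) :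
    (Gadget A B D u x).length = x + u := by
  simp only [Gadget, List.length_cons, List.length_append, List.length_replicate]
  omega

theorem getD_gadget (A B D : α) (u : ℕ) {x q : ℕ} (hx : 2 ≤ x) (hq : q < x + u) :
    (Gadget A B D u x).getD q D = if q = 0 then A else if q + 1 = x then B else D := by
  rcases q with _ | q
  · simp [Gadget]
  · simp only [Gadget, List.getD_eq_getElem?_getD, List.getElem?_append,
      List.length_replicate, List.getElem?_replicate, List.getElem?_cons]
    split_ifs <;> first | omega | simp

theorem length_flatten_map_gadget (A B D : α) (u : ℕ) {V : List ℕ} (hV : ∀ x ∈ V, 2 ≤ x) :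
    (V.map (Gadget A B D u)).flatten.length = gadgetOffset u V V.length := by
  rw [List.length_flatten, List.map_map, gadgetOffset_length]
  exact congrArg List.sum (List.map_congr_left fun x hx => length_gadget A B D u (hV x hx))

theorem length_flatten_map_gadget_le (A B D : α) (u : ℕ) {V : List ℕ}
    (hV : ∀ x ∈ V, 2 ≤ x ∧ x ≤ u) :
    (V.map (Gadget A B D u)).flatten.length ≤ 2 * u * V.length := by
  rw [length_flatten_map_gadget A B D u fun x hx => (hV x hx).1, gadgetOffset_length, mul_comm]
  simpa using List.sum_le_card_nsmul (V.map (· + u)) (2 * u) fun y hy => by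
    obtain ⟨x, hx, rfl⟩ := List.mem_map.1 hy
    have := hV x hx
    omega

theorem getD_flatten_map_gadget (A B D : α) (u : ℕ) {V : List ℕ} (hV : ∀ x ∈ V, 2 ≤ x)
    {k q : ℕ} (hk : k < V.length) (hq : q < V.getD k 0 + u) :
    (V.map (Gadget A B D u)).flatten.getD (gadgetOffset u V k + q) D =
      (Gadget A B D u (V.getD k 0)).getD q D := by
  induction V generalizing k with
  | nil => simp at hk
  | cons x V ih =>
    have hx := hV x (by simp)
    rw [List.map_cons, List.flatten_cons]
    rcases k with _ | k
    · simp only [List.getD_cons_zero] at hq ⊢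
      rw [gadgetOffset_zero, zero_add,
        List.getD_append _ _ _ _ (by rw [length_gadget A B D u hx]; exact hq)]
    · simp only [List.getD_cons_succ, List.length_cons] at hq hk ⊢
      rw [gadgetOffset_cons_succ, List.getD_append_right _ _ _ _ (by
        rw [length_gadget A B D u hx]; omega), length_gadget A B D u hx,
        show x + u + gadgetOffset u V k + q - (x + u) = gadgetOffset u V k + q by omega]
      exact ih (fun y hy => hV y (by simp [hy])) (by omega) hq

end Gadget

section GadgetMarkers

variable {α : Type*} {A B D : α}

theorem List.getD_mem {β : Type*} {l : List β} {k : ℕ} (hk : k < l.length) (d : β) :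
    l.getD k d ∈ l :=
  List.getD_eq_getElem _ _ hk ▸ List.getElem_mem hk

theorem two_le_getD {V : List ℕ} (hV : ∀ x ∈ V, 2 ≤ x) {k : ℕ} (hk : k < V.length) :
    2 ≤ V.getD k 0 :=
  hV _ (List.getD_mem hk 0)

theorem getD_flatten_map_gadget_eq_A_iff (hAB : A ≠ B) (hAD : A ≠ D) (u : ℕ) {V : List ℕ}
    (hV : ∀ x ∈ V, 2 ≤ x) {p : ℕ} (hp : p < gadgetOffset u V V.length) :
    (V.map (Gadget A B D u)).flatten.getD p D = A ↔
      ∃ k < V.length, gadgetOffset u V k = p := by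
  constructor
  · intro hpA
    obtain ⟨k, hk, q, hq, rfl⟩ := exists_eq_gadgetOffset_add u V hp
    rw [getD_flatten_map_gadget A B D u hV hk hq,
      getD_gadget A B D u (two_le_getD hV hk) hq] at hpA
    split_ifs at hpA
    · exact ⟨k, hk, by omega⟩
    · exact absurd hpA.symm hAB
    · exact absurd hpA.symm hAD
  · rintro ⟨k, hk, rfl⟩
    have hx := two_le_getD hV hk
    rw [← add_zero (gadgetOffset u V k), getD_flatten_map_gadget A B D u hV hk (by omega),
      getD_gadget A B D u hx (by omega), if_pos rfl]

theorem getD_flatten_map_gadget_eq_B_iff (hAB : A ≠ B) (hBD : B ≠ D) (u : ℕ) {V : List ℕ}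
    (hV : ∀ x ∈ V, 2 ≤ x) {p : ℕ} (hp : p < gadgetOffset u V V.length) :
    (V.map (Gadget A B D u)).flatten.getD p D = B ↔
      ∃ k < V.length, gadgetOffset u V k + V.getD k 0 = p + 1 := by
  constructor
  · intro hpB
    obtain ⟨k, hk, q, hq, rfl⟩ := exists_eq_gadgetOffset_add u V hp
    rw [getD_flatten_map_gadget A B D u hV hk hq,
      getD_gadget A B D u (two_le_getD hV hk) hq] at hpB
    split_ifs at hpB
    · exact absurd hpB hAB
    · exact ⟨k, hk, by omega⟩
    · exact absurd hpB.symm hBD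
  · rintro ⟨k, hk, hkp⟩
    have hx := two_le_getD hV hk
    rw [show p = gadgetOffset u V k + (V.getD k 0 - 1) by omega,
      getD_flatten_map_gadget A B D u hV hk (by omega), getD_gadget A B D u hx (by omega),
      if_neg (by omega), if_pos (by omega)]

/-- `A` of the `k`-th gadget at position `gadgetMarker u V (2 * k)`, its `B` at
`gadgetMarker u V (2 * k + 1)` (1-indexed). -/
def gadgetMarker (u : ℕ) (V : List ℕ) (r : ℕ) : ℕ :=
  gadgetOffset u V (r / 2) + if r % 2 = 0 then 1 else V.getD (r / 2) 0

theorem gadgetMarker_two_mul (u : ℕ) (V : List ℕ) (k : ℕ) :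
    gadgetMarker u V (2 * k) = gadgetOffset u V k + 1 := by
  simp [gadgetMarker]

theorem gadgetMarker_two_mul_add_one (u : ℕ) (V : List ℕ) (k : ℕ) :
    gadgetMarker u V (2 * k + 1) = gadgetOffset u V k + V.getD k 0 := by
  simp [gadgetMarker, show (2 * k + 1) / 2 = k by omega]

theorem alternatingMarkers_gadget (hAB : A ≠ B) (hAD : A ≠ D) (hBD : B ≠ D) (u : ℕ)
    {V : List ℕ} (hV : ∀ x ∈ V, 2 ≤ x) :
    AlternatingMarkers (V.map (Gadget A B D u)).flatten.length
      (fun p => (V.map (Gadget A B D u)).flatten.getD (p - 1) D) A B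
      (gadgetMarker u V) (2 * V.length) where
  one_le := by simp [gadgetMarker, gadgetOffset_zero]
  lt_succ r hr := by
    obtain ⟨k, rfl | rfl⟩ := Nat.even_or_odd' r
    · have := two_le_getD hV (show k < V.length by omega)
      rw [gadgetMarker_two_mul, gadgetMarker_two_mul_add_one]
      omega
    · rw [gadgetMarker_two_mul_add_one, show 2 * k + 1 + 1 = 2 * (k + 1) by ring,
        gadgetMarker_two_mul, gadgetOffset_succ u (by omega)]
      omega
  eq_sentinel := by rw [gadgetMarker_two_mul, length_flatten_map_gadget A B D u hV]
  eq_A_iff p hp hpn := by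
    rw [length_flatten_map_gadget A B D u hV] at hpn
    rw [getD_flatten_map_gadget_eq_A_iff hAB hAD u hV (by omega)]
    constructor
    · rintro ⟨k, hk, hkp⟩
      exact ⟨2 * k, by omega, by omega, by rw [gadgetMarker_two_mul]; omega⟩
    · rintro ⟨r, hr, hr2, rfl⟩
      obtain ⟨k, rfl | rfl⟩ := Nat.even_or_odd' r
      · exact ⟨k, by omega, by rw [gadgetMarker_two_mul]; omega⟩
      · omega
  eq_B_iff p hp hpn := by
    rw [length_flatten_map_gadget A B D u hV] at hpn
    rw [getD_flatten_map_gadget_eq_B_iff hAB hBD u hV (by omega)]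
    constructor
    · rintro ⟨k, hk, hkp⟩
      exact ⟨2 * k + 1, by omega, by omega, by rw [gadgetMarker_two_mul_add_one]; omega⟩
    · rintro ⟨r, hr, hr2, rfl⟩
      obtain ⟨k, rfl | rfl⟩ := Nat.even_or_odd' r
      · omega
      · have := two_le_getD hV (show k < V.length by omega)
        exact ⟨k, by omega, by rw [gadgetMarker_two_mul_add_one]; omega⟩

theorem gadgetMarker_gaps (u : ℕ) {V : List ℕ} (hV : ∀ x ∈ V, 2 ≤ x) {r : ℕ}
    (hr : r + 1 < 2 * V.length) :
    (gadgetMarker u V (r + 1) - gadgetMarker u V r + 1 ∈ V ∨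
        gadgetMarker u V (r + 1) - gadgetMarker u V r = u + 1) ∧
      ∃ x ∈ V, gadgetMarker u V (r + 2) - gadgetMarker u V r = x + u := by
  obtain ⟨k, rfl | rfl⟩ := Nat.even_or_odd' r
  · have hk : k < V.length := by omega
    have hx := two_le_getD hV hk
    rw [gadgetMarker_two_mul_add_one, show 2 * k + 2 = 2 * (k + 1) by ring,
      gadgetMarker_two_mul, gadgetMarker_two_mul, gadgetOffset_succ u hk]
    exact ⟨.inl (by rw [show gadgetOffset u V k + V.getD k 0 - (gadgetOffset u V k + 1) + 1 =
      V.getD k 0 by omega]; exact List.getD_mem hk 0), V.getD k 0, List.getD_mem hk 0, by omega⟩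
  · have hk : k + 1 < V.length := by omega
    rw [show 2 * k + 1 + 1 = 2 * (k + 1) by ring, show 2 * k + 1 + 2 = 2 * (k + 1) + 1 by ring,
      gadgetMarker_two_mul, gadgetMarker_two_mul_add_one, gadgetMarker_two_mul_add_one,
      gadgetOffset_succ u (show k < V.length by omega)]
    exact ⟨.inr (by omega), V.getD (k + 1) 0, List.getD_mem hk 0, by omega⟩

theorem exists_gadgetMarker_gap_eq (u : ℕ) {V : List ℕ} {x : ℕ} (hx : x ∈ V) (hx2 : 2 ≤ x) :
    ∃ r, r + 1 < 2 * V.length ∧ gadgetMarker u V (r + 1) - gadgetMarker u V r + 1 = x := by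
  obtain ⟨k, hk, rfl⟩ := List.getElem_of_mem hx
  refine ⟨2 * k, by omega, ?_⟩
  rw [gadgetMarker_two_mul_add_one, gadgetMarker_two_mul, List.getD_eq_getElem _ _ hk]
  omega

end GadgetMarkers

-- The paper's `d` is the cardinality of this set.
noncomputable def lmcoJumps {α : Type*} (n : ℕ) (S : ℕ → α) (Q : Finset α) : Finset ℕ :=
  (Icc 2 n).filter fun i => lmco n S Q i ≠ lmco n S Q (i - 1)

section GadgetJumps

variable {α : Type*} [DecidableEq α] {A B D : α}

theorem lmcoJumps_flatten_map_gadget_subset (hAB : A ≠ B) (hAD : A ≠ D) (hBD : B ≠ D) (u : ℕ)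
    {V : List ℕ} (hV : ∀ x ∈ V, 2 ≤ x) :
    lmcoJumps (V.map (Gadget A B D u)).flatten.length
        (fun p => (V.map (Gadget A B D u)).flatten.getD (p - 1) D) {A, B} ⊆
      insert (u + 2) (V.toFinset ∪ V.toFinset.image (· + u + 1)) := by
  intro w hw
  obtain ⟨r, hr, hw⟩ :=
    (alternatingMarkers_gadget hAB hAD hBD u hV).exists_gap_of_lmco_ne (mem_filter.1 hw).2
  obtain ⟨hgap₁, x, hx, hgap₂⟩ := gadgetMarker_gaps u hV hr
  simp only [mem_insert, mem_union, List.mem_toFinset, mem_image]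
  rcases hw with rfl | rfl
  · rcases hgap₁ with h | h
    · exact .inr (.inl h)
    · exact .inl (by omega)
  · exact .inr (.inr ⟨x, hx, by omega⟩)

theorem card_lmcoJumps_flatten_map_gadget_le (hAB : A ≠ B) (hAD : A ≠ D) (hBD : B ≠ D)
    (u : ℕ) {V : List ℕ} (hV : ∀ x ∈ V, 2 ≤ x) :
    (lmcoJumps (V.map (Gadget A B D u)).flatten.length
        (fun p => (V.map (Gadget A B D u)).flatten.getD (p - 1) D) {A, B}).card ≤
      2 * V.toFinset.card + 1 :=
  calc _ ≤ (insert (u + 2) (V.toFinset ∪ V.toFinset.image (· + u + 1))).card :=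
        card_le_card (lmcoJumps_flatten_map_gadget_subset hAB hAD hBD u hV)
    _ ≤ (V.toFinset ∪ V.toFinset.image (· + u + 1)).card + 1 := card_insert_le _ _
    _ ≤ V.toFinset.card + (V.toFinset.image (· + u + 1)).card + 1 := by
        gcongr; exact card_union_le _ _
    _ ≤ 2 * V.toFinset.card + 1 := by
        have := card_image_le (s := V.toFinset) (f := (· + u + 1))
        omega

theorem mem_lmcoJumps_flatten_map_gadget (hAB : A ≠ B) (hAD : A ≠ D) (hBD : B ≠ D)
    (u : ℕ) {V : List ℕ} (hV : ∀ x ∈ V, 2 ≤ x) {x : ℕ} (hx : x ∈ V) (hxu : x ≤ u) :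
    x ∈ lmcoJumps (V.map (Gadget A B D u)).flatten.length
      (fun p => (V.map (Gadget A B D u)).flatten.getD (p - 1) D) {A, B} := by
  have hlt := (alternatingMarkers_gadget hAB hAD hBD u hV).lmco_pred_lt (w := x)
    (fun r hr => by
      obtain ⟨-, y, hy, hgap⟩ := gadgetMarker_gaps u hV hr
      have := hV y hy
      omega)
    (exists_gadgetMarker_gap_eq u hx (hV x hx))
  exact mem_filter.2
    ⟨mem_Icc.2 ⟨hV x hx, le_of_lmco_ne_zero (Nat.ne_zero_of_lt hlt)⟩, hlt.ne'⟩

end GadgetJumps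

def gadgetSeq (m : ℕ) (e c : ℕ → ℕ) : List ℕ :=
  ((List.range m).map fun j => List.replicate (c (j + 1)) (e (j + 1))).flatten

theorem gadgetString_eq_flatten_map {α : Type*} (A B D : α) (u m : ℕ) (e c : ℕ → ℕ) :
    GadgetString A B D u m e c = ((gadgetSeq m e c).map (Gadget A B D u)).flatten := by
  simp [GadgetString, gadgetSeq, List.map_flatten, List.flatten_flatten, Function.comp_def,
    List.map_replicate]

theorem mem_gadgetSeq {m : ℕ} {e c : ℕ → ℕ} {x : ℕ} :
    x ∈ gadgetSeq m e c ↔ ∃ j ∈ Icc 1 m, 0 < c j ∧ e j = x := by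
  simp only [gadgetSeq, List.mem_flatten, List.mem_map, List.mem_range,
    exists_exists_and_eq_and, List.mem_replicate, mem_Icc]
  constructor
  · rintro ⟨j, hj, hc, rfl⟩
    exact ⟨j + 1, by omega, by omega, rfl⟩
  · rintro ⟨_ | j, hj, hc, rfl⟩
    · omega
    · exact ⟨j, by omega, by omega, rfl⟩

theorem toFinset_gadgetSeq_subset (m : ℕ) (e c : ℕ → ℕ) :
    (gadgetSeq m e c).toFinset ⊆ (Icc 1 m).image e := fun x hx => by
  obtain ⟨j, hj, -, rfl⟩ := mem_gadgetSeq.1 (List.mem_toFinset.1 hx)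
  exact mem_image_of_mem e hj

theorem length_gadgetSeq (m : ℕ) (e c : ℕ → ℕ) :
    (gadgetSeq m e c).length = ∑ j ∈ Icc 1 m, c j := by
  simp only [gadgetSeq, List.length_flatten, List.map_map, Function.comp_def,
    List.length_replicate]
  change ∑ j ∈ range m, c (j + 1) = _
  rw [range_eq_Ico, sum_Ico_add' c 0 m 1]
  rfl

theorem stmt17_general {α : Type*} [DecidableEq α] (A B D : α)
    (hAB : A ≠ B) (hAD : A ≠ D) (hBD : B ≠ D)
    (u m : ℕ) (hm : 1 ≤ m) (e c : ℕ → ℕ)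
    (he : ∀ j ∈ Finset.Icc 1 m, e j ∈ Finset.Icc 2 u)
    (hmono : ∀ i ∈ Finset.Icc 1 m, ∀ j ∈ Finset.Icc 1 m, i < j → e i < e j)
    (hc : ∀ j ∈ Finset.Icc 1 m, 0 < c j) :
    m ≤ ((Finset.Icc 2 (GadgetString A B D u m e c).length).filter
          (fun i => lmco (GadgetString A B D u m e c).length
              (fun k => (GadgetString A B D u m e c).getD (k-1) D) ({A, B} : Finset α) i ≠
            lmco (GadgetString A B D u m e c).length
              (fun k => (GadgetString A B D u m e c).getD (k-1) D) ({A, B} : Finset α)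
              (i-1))).card ∧
    ((Finset.Icc 2 (GadgetString A B D u m e c).length).filter
          (fun i => lmco (GadgetString A B D u m e c).length
              (fun k => (GadgetString A B D u m e c).getD (k-1) D) ({A, B} : Finset α) i ≠
            lmco (GadgetString A B D u m e c).length
              (fun k => (GadgetString A B D u m e c).getD (k-1) D) ({A, B} : Finset α)
              (i-1))).card ≤ 8 * m ∧
    (GadgetString A B D u m e c).length ≤ 2 * u * ∑ j ∈ Finset.Icc 1 m, c j := by
  have hV : ∀ x ∈ gadgetSeq m e c, 2 ≤ x ∧ x ≤ u := fun x hx => by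
    obtain ⟨j, hj, -, rfl⟩ := mem_gadgetSeq.1 hx
    exact mem_Icc.1 (he j hj)
  have hV₂ : ∀ x ∈ gadgetSeq m e c, 2 ≤ x := fun x hx => (hV x hx).1
  have hcard_image : ((Icc 1 m).image e).card = m := by
    rw [card_image_of_injOn (StrictMonoOn.injOn fun i hi j hj hij => hmono i hi j hj hij),
      Nat.card_Icc, Nat.add_sub_cancel]
  rw [gadgetString_eq_flatten_map]
  refine ⟨?_, ?_, ?_⟩
  · calc m = ((Icc 1 m).image e).card := hcard_image.symm
      _ ≤ _ := card_le_card fun x hx => by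
          obtain ⟨j, hj, rfl⟩ := mem_image.1 hx
          exact mem_lmcoJumps_flatten_map_gadget hAB hAD hBD u hV₂
            (mem_gadgetSeq.2 ⟨j, hj, hc j hj, rfl⟩) (mem_Icc.1 (he j hj)).2
  · have := (card_le_card (toFinset_gadgetSeq_subset m e c)).trans hcard_image.le
    exact (card_lmcoJumps_flatten_map_gadget_le hAB hAD hBD u hV₂).trans (by omega)
  · rw [← length_gadgetSeq m e c]
    exact length_flatten_map_gadget_le A B D u hV

theorem stmt17 {α : Type*} [DecidableEq α] (A B D : α)
    (hAB : A ≠ B) (hAD : A ≠ D) (hBD : B ≠ D)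
    (u m : ℕ) (hu : 2 ≤ u) (hm : 1 ≤ m) (e c : ℕ → ℕ)
    (he : ∀ j ∈ Finset.Icc 1 m, e j ∈ Finset.Icc 2 u)
    (hmono : ∀ i ∈ Finset.Icc 1 m, ∀ j ∈ Finset.Icc 1 m, i < j → e i < e j)
    (hc : ∀ j ∈ Finset.Icc 1 m, 0 < c j) :
    m ≤ ((Finset.Icc 2 (GadgetString A B D u m e c).length).filter
          (fun i => lmco (GadgetString A B D u m e c).length
              (fun k => (GadgetString A B D u m e c).getD (k-1) D) ({A, B} : Finset α) i ≠
            lmco (GadgetString A B D u m e c).length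
              (fun k => (GadgetString A B D u m e c).getD (k-1) D) ({A, B} : Finset α)
              (i-1))).card ∧
    ((Finset.Icc 2 (GadgetString A B D u m e c).length).filter
          (fun i => lmco (GadgetString A B D u m e c).length
              (fun k => (GadgetString A B D u m e c).getD (k-1) D) ({A, B} : Finset α) i ≠
            lmco (GadgetString A B D u m e c).length
              (fun k => (GadgetString A B D u m e c).getD (k-1) D) ({A, B} : Finset α)
              (i-1))).card ≤ 8 * m ∧
    (GadgetString A B D u m e c).length ≤ 2 * u * ∑ j ∈ Finset.Icc 1 m, c j :=
  stmt17_general A B D hAB hAD hBD u m hm e c he hmono hc
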